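/- arXiv:2407.19454 — 4 statements merged into one kernel-verified Lean document; each statement's English description precedes it below -/
import Mathlib

section
/- Let G₁ and G₂ be finite phylogenetic networks and let ℓ be a leaf of G₁. Let G be the finite phylogenetic network obtained from the disjoint union of G₁ and G₂ by identifying ℓ with the root of G₂. Then B₂(G) = B₂(G₁) + p_ℓ · B₂(G₂), where p_ℓ is the probability, computed in G₁, that the directed random walk from the root of G₁ ends in ℓ. -/
/-!
Grafting property of the B₂ index (Proposition "grafting property", finite case).

A finite phylogenetic network is modelled as a finite vertex type `V` together with
an edge-multiplicity function `adj : V → V → ℕ` and a distinguished vertex `root`;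
`IsPhylo` states that the digraph is acyclic, that the root has in-degree 0, and that
every vertex is reachable from the root.  For a vertex `v`, `pvisit G v` is the sum,
over all directed paths from the root to `v`, of the product of `1/d⁺` along the path
(paths in a DAG on `V` have fewer than `card V` edges, so the truncated sum is exact),
and `B2 G` is the entropy `-∑_{leaves ℓ} p_ℓ log₂ p_ℓ`.
-/

open Finset Filter

namespace GalledB2

structure Net (V : Type*) where
  adj : V → V → ℕ
  root : V

def IsPhylo {V : Type*} (G : Net V) : Prop :=
  (∀ v, ¬ Relation.TransGen (fun a b => 0 < G.adj a b) v v) ∧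
  (∀ u, G.adj u G.root = 0) ∧
  (∀ v, Relation.ReflTransGen (fun a b => 0 < G.adj a b) G.root v)

variable {V : Type*} [Fintype V]

def outDeg (G : Net V) (v : V) : ℕ := ∑ u, G.adj v u

def inDeg (G : Net V) (v : V) : ℕ := ∑ u, G.adj u v

def IsLeaf (G : Net V) (v : V) : Prop := outDeg G v = 0

open Classical in
/-- The probability that the directed random walk started at the root visits `v`:
the sum over all directed paths from the root to `v` of `∏ 1/d⁺` along the path. -/
noncomputable def pvisit (G : Net V) (v : V) : ℝ :=
  ∑ j ∈ Finset.range (Fintype.card V), ∑ f : Fin (j + 1) → V,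
    if f 0 = G.root ∧ f (Fin.last j) = v then
      ∏ i : Fin j, (G.adj (f i.castSucc) (f i.succ) : ℝ) / (outDeg G (f i.castSucc) : ℝ)
    else 0

open Classical in
/-- The B₂ index of a finite phylogenetic network. -/
noncomputable def B2 (G : Net V) : ℝ :=
  - ∑ v ∈ Finset.univ.filter (fun v => IsLeaf G v),
      pvisit G v * Real.logb 2 (pvisit G v)

/-!
The walk probabilities are the root row of `∑_{j < |V|} S ^ j`, where `S` is the transition
matrix; in an acyclic network `S` is nilpotent, so `p` is the unique solution of
`p = δ_root + p S`. In the grafted network the restriction of `p` to `G₁` solves the equation of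
`G₁`, and its restriction to `G₂` solves that of `G₂` with initial mass `p_ℓ`; hence `p = p₁` on
`G₁` and `p = p_ℓ p₂` on `G₂`. The leaves of `G` are those of `G₁` other than `ℓ` together with
those of `G₂`, and the leaf probabilities of `G₂` sum to `1`, so `φ(xy) = y φ(x) + x φ(y)` for
`φ(x) = x log₂ x` gives the formula.
-/

section

open Matrix

variable {n R : Type*} [Fintype n] [DecidableEq n]

theorem _root_.Matrix.pow_apply_eq_sum_paths [CommSemiring R] (M : Matrix n n R)
    (j : ℕ) (u v : n) :
    (M ^ j) u v = ∑ f : Fin (j + 1) → n,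
      if f 0 = u ∧ f (Fin.last j) = v then ∏ i : Fin j, M (f i.castSucc) (f i.succ) else 0 := by
  induction j generalizing v with
  | zero =>
    rw [pow_zero, one_apply, ← (Equiv.funUnique (Fin 1) n).symm.sum_comp]
    simp [ite_and, Finset.sum_ite_eq']
  | succ j ih =>
    rw [pow_succ, mul_apply, ← (Fin.snocEquiv fun _ => n).sum_comp, Fintype.sum_prod_type_right]
    simp only [ih, Finset.sum_mul, ite_mul, zero_mul]
    rw [Finset.sum_comm]
    refine Finset.sum_congr rfl fun g _ => ?_
    simp [Fin.prod_univ_castSucc, ite_and, -Fin.castSucc_succ, Fin.succ_castSucc]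

theorem _root_.Matrix.pow_card_eq_zero_of_acyclic [Semiring R] (M : Matrix n n R)
    (hM : ∀ v, ¬ Relation.TransGen (fun a b => M a b ≠ 0) v v) : M ^ Fintype.card n = 0 := by
  classical
  let ancestors (v : n) := univ.filter fun a => Relation.TransGen (fun a b => M a b ≠ 0) a v
  have ancestors_ssubset {a b : n} (hab : M a b ≠ 0) : ancestors a ⊂ ancestors b := by
    refine Finset.ssubset_iff_of_subset (fun x hx => ?_) |>.mpr ⟨a, ?_, ?_⟩
    · simp only [ancestors, Finset.mem_filter, Finset.mem_univ, true_and] at hx ⊢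
      exact hx.tail hab
    · simpa [ancestors] using Relation.TransGen.single (r := fun a b => M a b ≠ 0) hab
    · simpa [ancestors] using hM a
  have le_card_ancestors : ∀ j u v, (M ^ j) u v ≠ 0 → j ≤ #(ancestors v) := by
    intro j
    induction j with
    | zero => simp
    | succ j ih =>
      intro u v huv
      rw [pow_succ, mul_apply] at huv
      obtain ⟨w, -, hw⟩ := Finset.exists_ne_zero_of_sum_ne_zero huv
      exact (ih u w (left_ne_zero_of_mul hw)).trans_lt
        (Finset.card_lt_card (ancestors_ssubset (right_ne_zero_of_mul hw)))
  ext u v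
  by_contra huv
  exact (le_card_ancestors _ u v huv).not_gt
    (Finset.card_lt_univ_of_notMem (by simpa [ancestors] using hM v))

theorem _root_.Matrix.eq_vecMul_geom_sum_iff [Ring R] {M : Matrix n n R} {k : ℕ}
    (hM : M ^ k = 0) {b x : n → R} :
    x = b + x ᵥ* M ↔ x = b ᵥ* ∑ j ∈ range k, M ^ j := by
  have hright : 1 + (∑ j ∈ range k, M ^ j) * M = ∑ j ∈ range k, M ^ j := by
    have h := geom_sum_mul_neg M k
    rw [hM, sub_zero, mul_sub, mul_one] at h
    rw [← h]; abel
  have hleft : (1 - M) * ∑ j ∈ range k, M ^ j = 1 := by rw [mul_neg_geom_sum, hM, sub_zero]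
  constructor
  · intro hx
    have hb : x ᵥ* (1 - M) = b := by
      rw [vecMul_sub, vecMul_one]; exact sub_eq_of_eq_add hx
    rw [← hb, vecMul_vecMul, hleft, vecMul_one]
  · rintro rfl
    conv_lhs => rw [← hright]
    rw [vecMul_add, vecMul_one, vecMul_vecMul]

end

theorem mul_logb_mul_eq (b x y : ℝ) :
    x * y * Real.logb b (x * y) = y * (x * Real.logb b x) + x * (y * Real.logb b y) := by
  have h := Real.negMulLog_mul x y
  simp only [Real.negMulLog, Real.logb, div_eq_mul_inv] at h ⊢
  linear_combination (-(Real.log b)⁻¹) * h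

def IsAcyclic {V : Type*} (G : Net V) : Prop :=
  ∀ v, ¬ Relation.TransGen (fun a b => 0 < G.adj a b) v v

section RandomWalk

open Classical Matrix

/-- The row of a leaf is `0` (division by `outDeg = 0`), so the walk is absorbed at leaves. -/
noncomputable def stepMatrix (G : Net V) : Matrix V V ℝ :=
  Matrix.of fun u v => (G.adj u v : ℝ) / outDeg G u

@[simp]
theorem stepMatrix_apply (G : Net V) (u v : V) :
    stepMatrix G u v = (G.adj u v : ℝ) / outDeg G u :=
  rfl

theorem IsLeaf.adj_eq_zero {G : Net V} {u : V} (hu : IsLeaf G u) (v : V) : G.adj u v = 0 :=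
  Finset.sum_eq_zero_iff.mp hu v (mem_univ v)

theorem sum_stepMatrix (G : Net V) (u : V) :
    ∑ v, stepMatrix G u v = if IsLeaf G u then 0 else 1 := by
  split_ifs with hu
  · simp [hu.adj_eq_zero]
  · simp only [stepMatrix_apply, ← Finset.sum_div, ← Nat.cast_sum]
    exact div_self (by exact_mod_cast hu)

theorem IsAcyclic.stepMatrix_pow_card_eq_zero {G : Net V} (hG : IsAcyclic G) :
    stepMatrix G ^ Fintype.card V = 0 := by
  refine Matrix.pow_card_eq_zero_of_acyclic _ fun v hv =>
    hG v (Relation.TransGen.mono (fun a b hab => Nat.pos_of_ne_zero fun h => ?_) v v hv)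
  simp [h] at hab

theorem pvisit_eq_vecMul (G : Net V) :
    pvisit G = Pi.single G.root 1 ᵥ* ∑ j ∈ range (Fintype.card V), stepMatrix G ^ j := by
  ext v
  simp only [pvisit, single_one_vecMul, row, Matrix.sum_apply, pow_apply_eq_sum_paths,
    stepMatrix_apply]

theorem IsAcyclic.pvisit_eq {G : Net V} (hG : IsAcyclic G) (v : V) :
    pvisit G v = (Pi.single G.root 1 : V → ℝ) v + ∑ u, pvisit G u * stepMatrix G u v := by
  rw [← vecMul_apply_eq_sum, ← Pi.add_apply]
  exact congrFun ((eq_vecMul_geom_sum_iff hG.stepMatrix_pow_card_eq_zero).mpr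
    (pvisit_eq_vecMul G)) v

theorem IsAcyclic.eq_mul_pvisit {G : Net V} (hG : IsAcyclic G) {f : V → ℝ} {c : ℝ}
    (hf : ∀ v, f v = (Pi.single G.root c : V → ℝ) v + ∑ u, f u * stepMatrix G u v) (v : V) :
    f v = c * pvisit G v := by
  have hfix : f = Pi.single G.root c + f ᵥ* stepMatrix G :=
    funext fun v => (hf v).trans (by rw [Pi.add_apply, vecMul_apply_eq_sum])
  rw [(eq_vecMul_geom_sum_iff hG.stepMatrix_pow_card_eq_zero).mp hfix, pvisit_eq_vecMul]
  simp

theorem IsAcyclic.sum_pvisit_leaves {G : Net V} (hG : IsAcyclic G) :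
    ∑ v ∈ univ.filter (fun v => IsLeaf G v), pvisit G v = 1 := by
  have htotal : ∑ v, pvisit G v = 1 + ∑ u ∈ univ.filter (fun u => ¬ IsLeaf G u), pvisit G u :=
    calc ∑ v, pvisit G v
        = ∑ v, ((Pi.single G.root 1 : V → ℝ) v + ∑ u, pvisit G u * stepMatrix G u v) :=
          Finset.sum_congr rfl fun v _ => hG.pvisit_eq v
      _ = 1 + ∑ u, pvisit G u * ∑ v, stepMatrix G u v := by
          rw [Finset.sum_add_distrib, Finset.sum_pi_single', if_pos (mem_univ _), Finset.sum_comm]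
          simp only [Finset.mul_sum]
      _ = 1 + ∑ u ∈ univ.filter (fun u => ¬ IsLeaf G u), pvisit G u := by
          simp only [sum_stepMatrix, mul_ite, mul_zero, mul_one, Finset.sum_ite,
            Finset.sum_const_zero, zero_add]
  rw [← Finset.sum_filter_add_sum_filter_not univ (fun v => IsLeaf G v)] at htotal
  linarith

theorem IsAcyclic.sum_leaves_mul_logb {G : Net V} (hG : IsAcyclic G) (c : ℝ) :
    ∑ v ∈ univ.filter (fun v => IsLeaf G v), c * pvisit G v * Real.logb 2 (c * pvisit G v)
      = c * Real.logb 2 c - c * B2 G := by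
  simp only [mul_logb_mul_eq, Finset.sum_add_distrib, ← Finset.sum_mul, ← Finset.mul_sum,
    hG.sum_pvisit_leaves, B2]
  ring

end RandomWalk

/-- `G` arises from `G₁ ⊔ G₂` by identifying the leaf `ℓ` with the root of `G₂`; `i₁` and `i₂`
are the two embeddings. -/
structure IsGrafting {V₁ V₂ V : Type*} [Fintype V₁] (G₁ : Net V₁) (G₂ : Net V₂) (G : Net V)
    (ℓ : V₁) (i₁ : V₁ → V) (i₂ : V₂ → V) : Prop where
  isLeaf : IsLeaf G₁ ℓ
  injective₁ : Function.Injective i₁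
  injective₂ : Function.Injective i₂
  cover : ∀ v : V, (∃ u, i₁ u = v) ∨ ∃ u, i₂ u = v
  glue : ∀ u₁ u₂, i₁ u₁ = i₂ u₂ ↔ u₁ = ℓ ∧ u₂ = G₂.root
  root : G.root = i₁ G₁.root
  adj₁ : ∀ u v, G.adj (i₁ u) (i₁ v) = G₁.adj u v
  adj₂ : ∀ u v, G.adj (i₂ u) (i₂ v) = G₂.adj u v
  edges : ∀ a b, 0 < G.adj a b →
    ((∃ u, i₁ u = a) ∧ ∃ v, i₁ v = b) ∨ ((∃ u, i₂ u = a) ∧ ∃ v, i₂ v = b)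

namespace IsGrafting

variable {V₁ V₂ W : Type*} [Fintype V₁] {G₁ : Net V₁} {G₂ : Net V₂} {G : Net W}
  {ℓ : V₁} {i₁ : V₁ → W} {i₂ : V₂ → W}

theorem i₁_eq_i₂_root (hg : IsGrafting G₁ G₂ G ℓ i₁ i₂) : i₁ ℓ = i₂ G₂.root :=
  (hg.glue ℓ G₂.root).mpr ⟨rfl, rfl⟩

open Classical in
theorem sum_eq_sum_erase_add_sum [Fintype V₂] [Fintype W] (hg : IsGrafting G₁ G₂ G ℓ i₁ i₂)
    {M : Type*} [AddCommMonoid M] (F : W → M) :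
    ∑ x, F x = ∑ u ∈ univ.erase ℓ, F (i₁ u) + ∑ w, F (i₂ w) := by
  have hdisj : Disjoint ((univ.erase ℓ).image i₁) (univ.image i₂) := by
    simp only [Finset.disjoint_left, Finset.mem_image, Finset.mem_erase, mem_univ, and_true,
      true_and]
    rintro _ ⟨u, hu, rfl⟩ ⟨w, hw⟩
    exact hu ((hg.glue u w).mp hw.symm).1
  have hunion : (univ.erase ℓ).image i₁ ∪ univ.image i₂ = univ := by
    refine Finset.eq_univ_of_forall fun x => ?_
    simp only [Finset.mem_union, Finset.mem_image, Finset.mem_erase, mem_univ, and_true, true_and]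
    rcases hg.cover x with ⟨u, rfl⟩ | h
    · by_cases hu : u = ℓ
      · exact .inr ⟨G₂.root, by rw [hu, hg.i₁_eq_i₂_root]⟩
      · exact .inl ⟨u, hu, rfl⟩
    · exact .inr h
  rw [← Finset.sum_image hg.injective₁.injOn, ← Finset.sum_image hg.injective₂.injOn,
    ← Finset.sum_union hdisj, hunion]

theorem adj_i₂_i₁ (hg : IsGrafting G₁ G₂ G ℓ i₁ i₂) (h₂root : ∀ u, G₂.adj u G₂.root = 0)
    (w : V₂) (v : V₁) : G.adj (i₂ w) (i₁ v) = 0 := by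
  by_contra hne
  rcases hg.edges _ _ (Nat.pos_of_ne_zero hne) with ⟨⟨u, hu⟩, -⟩ | ⟨-, ⟨w', hw'⟩⟩
  · obtain ⟨rfl, rfl⟩ := (hg.glue u w).mp hu
    exact hne (by rw [← hu, hg.adj₁, hg.isLeaf.adj_eq_zero])
  · obtain ⟨rfl, rfl⟩ := (hg.glue v w').mp hw'.symm
    exact hne (by rw [← hw', hg.adj₂, h₂root])

theorem adj_i₁_i₂ (hg : IsGrafting G₁ G₂ G ℓ i₁ i₂) {u : V₁} {w : V₂} (hu : u ≠ ℓ)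
    (hw : w ≠ G₂.root) : G.adj (i₁ u) (i₂ w) = 0 := by
  by_contra hne
  rcases hg.edges _ _ (Nat.pos_of_ne_zero hne) with ⟨-, ⟨v, hv⟩⟩ | ⟨⟨w', hw'⟩, -⟩
  · exact hw ((hg.glue v w).mp hv).2
  · exact hu ((hg.glue u w').mp hw'.symm).1

theorem outDeg_i₁ [Fintype V₂] [Fintype W] (hg : IsGrafting G₁ G₂ G ℓ i₁ i₂) {u : V₁}
    (hu : u ≠ ℓ) : outDeg G (i₁ u) = outDeg G₁ u := by
  classical
  have hright : ∑ w, G.adj (i₁ u) (i₂ w) = G₁.adj u ℓ := by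
    rw [Finset.sum_eq_single G₂.root (fun w _ hw => hg.adj_i₁_i₂ hu hw) (by simp),
      ← hg.i₁_eq_i₂_root, hg.adj₁]
  rw [outDeg, hg.sum_eq_sum_erase_add_sum, hright]
  simp only [hg.adj₁, Finset.sum_erase_add _ _ (mem_univ ℓ), outDeg]

theorem outDeg_i₂ [Fintype V₂] [Fintype W] (hg : IsGrafting G₁ G₂ G ℓ i₁ i₂)
    (h₂root : ∀ u, G₂.adj u G₂.root = 0) (w : V₂) : outDeg G (i₂ w) = outDeg G₂ w := by
  simp only [outDeg, hg.sum_eq_sum_erase_add_sum, hg.adj_i₂_i₁ h₂root, hg.adj₂,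
    Finset.sum_const_zero, zero_add]

theorem stepMatrix_i₁ [Fintype V₂] [Fintype W] (hg : IsGrafting G₁ G₂ G ℓ i₁ i₂) (u v : V₁) :
    stepMatrix G (i₁ u) (i₁ v) = stepMatrix G₁ u v := by
  by_cases hu : u = ℓ
  · subst hu
    simp [hg.adj₁, hg.isLeaf.adj_eq_zero]
  · simp [hg.adj₁, hg.outDeg_i₁ hu]

theorem stepMatrix_i₂ [Fintype V₂] [Fintype W] (hg : IsGrafting G₁ G₂ G ℓ i₁ i₂)
    (h₂root : ∀ u, G₂.adj u G₂.root = 0) (u v : V₂) :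
    stepMatrix G (i₂ u) (i₂ v) = stepMatrix G₂ u v := by
  simp [hg.adj₂, hg.outDeg_i₂ h₂root]

theorem isLeaf_i₁_iff [Fintype V₂] [Fintype W] (hg : IsGrafting G₁ G₂ G ℓ i₁ i₂) {u : V₁}
    (hu : u ≠ ℓ) : IsLeaf G (i₁ u) ↔ IsLeaf G₁ u := by
  rw [IsLeaf, IsLeaf, hg.outDeg_i₁ hu]

theorem isLeaf_i₂_iff [Fintype V₂] [Fintype W] (hg : IsGrafting G₁ G₂ G ℓ i₁ i₂)
    (h₂root : ∀ u, G₂.adj u G₂.root = 0) (w : V₂) : IsLeaf G (i₂ w) ↔ IsLeaf G₂ w := by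
  rw [IsLeaf, IsLeaf, hg.outDeg_i₂ h₂root]

theorem exists_of_adj_i₂_pos (hg : IsGrafting G₁ G₂ G ℓ i₁ i₂) (h₂root : ∀ u, G₂.adj u G₂.root = 0)
    {w : V₂} {y : W} (h : 0 < G.adj (i₂ w) y) : ∃ w', i₂ w' = y ∧ 0 < G₂.adj w w' := by
  rcases hg.cover y with ⟨v, rfl⟩ | ⟨w', rfl⟩
  · exact absurd h (by simp [hg.adj_i₂_i₁ h₂root])
  · exact ⟨w', rfl, hg.adj₂ w w' ▸ h⟩

theorem transGen_i₂ (hg : IsGrafting G₁ G₂ G ℓ i₁ i₂) (h₂root : ∀ u, G₂.adj u G₂.root = 0)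
    {w : V₂} {y : W} (h : Relation.TransGen (fun a b => 0 < G.adj a b) (i₂ w) y) :
    ∃ w', i₂ w' = y ∧ Relation.TransGen (fun a b => 0 < G₂.adj a b) w w' := by
  induction h with
  | single hab =>
    obtain ⟨w', rfl, h'⟩ := hg.exists_of_adj_i₂_pos h₂root hab
    exact ⟨w', rfl, .single h'⟩
  | tail _ hbc ih =>
    obtain ⟨w', rfl, h'⟩ := ih
    obtain ⟨w'', rfl, h''⟩ := hg.exists_of_adj_i₂_pos h₂root hbc
    exact ⟨w'', rfl, h'.tail h''⟩

theorem transGen_i₁ (hg : IsGrafting G₁ G₂ G ℓ i₁ i₂) (h₂root : ∀ u, G₂.adj u G₂.root = 0)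
    {u : V₁} {y : W} (h : Relation.TransGen (fun a b => 0 < G.adj a b) (i₁ u) y) :
    (∃ v, i₁ v = y ∧ Relation.TransGen (fun a b => 0 < G₁.adj a b) u v) ∨ ∃ w, i₂ w = y := by
  induction h with
  | @single b hab =>
    rcases hg.cover b with ⟨v, rfl⟩ | h
    · exact .inl ⟨v, rfl, .single (hg.adj₁ u v ▸ hab)⟩
    · exact .inr h
  | @tail b c _ hbc ih =>
    rcases ih with ⟨v, rfl, huv⟩ | ⟨w, rfl⟩
    · rcases hg.cover c with ⟨v', rfl⟩ | h
      · exact .inl ⟨v', rfl, huv.tail (hg.adj₁ v v' ▸ hbc)⟩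
      · exact .inr h
    · obtain ⟨w', rfl, -⟩ := hg.exists_of_adj_i₂_pos h₂root hbc
      exact .inr ⟨w', rfl⟩

/-- Edges leaving the `G₂`-part stay in it, so a cycle lies entirely in one of the two parts. -/
theorem isAcyclic (hg : IsGrafting G₁ G₂ G ℓ i₁ i₂) (h₁ : IsAcyclic G₁) (h₂ : IsAcyclic G₂)
    (h₂root : ∀ u, G₂.adj u G₂.root = 0) : IsAcyclic G := by
  have acyclic_i₂ (w : V₂) : ¬ Relation.TransGen (fun a b => 0 < G.adj a b) (i₂ w) (i₂ w) :=
    fun hw => by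
      obtain ⟨w', hw', h⟩ := hg.transGen_i₂ h₂root hw
      exact h₂ w (hg.injective₂ hw' ▸ h)
  intro x hx
  rcases hg.cover x with ⟨u, rfl⟩ | ⟨w, rfl⟩
  · rcases hg.transGen_i₁ h₂root hx with ⟨v, hv, h⟩ | ⟨w, hw⟩
    · exact h₁ u (hg.injective₁ hv ▸ h)
    · exact acyclic_i₂ w (hw ▸ hx)
  · exact acyclic_i₂ w hx

theorem pvisit_i₁ [Fintype V₂] [Fintype W] (hg : IsGrafting G₁ G₂ G ℓ i₁ i₂) (h₁ : IsAcyclic G₁)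
    (h₂ : IsAcyclic G₂) (h₂root : ∀ u, G₂.adj u G₂.root = 0) (u : V₁) :
    pvisit G (i₁ u) = pvisit G₁ u := by
  classical
  refine (h₁.eq_mul_pvisit (f := fun u => pvisit G (i₁ u)) (fun v => ?_) u).trans (one_mul _)
  have hleaf : pvisit G (i₁ ℓ) * stepMatrix G₁ ℓ v = 0 := by simp [hg.isLeaf.adj_eq_zero]
  have hback (w : V₂) : pvisit G (i₂ w) * stepMatrix G (i₂ w) (i₁ v) = 0 := by
    simp [hg.adj_i₂_i₁ h₂root]
  rw [(hg.isAcyclic h₁ h₂ h₂root).pvisit_eq, hg.sum_eq_sum_erase_add_sum, hg.root, Pi.single_apply,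
    Pi.single_apply, hg.injective₁.eq_iff]
  simp only [hg.stepMatrix_i₁, hback, Finset.sum_const_zero, add_zero,
    Finset.sum_erase (f := fun x => pvisit G (i₁ x) * stepMatrix G₁ x v) _ hleaf]

theorem pvisit_i₂ [Fintype V₂] [Fintype W] (hg : IsGrafting G₁ G₂ G ℓ i₁ i₂) (h₁ : IsAcyclic G₁)
    (h₂ : IsAcyclic G₂) (h₂root : ∀ u, G₂.adj u G₂.root = 0) (w : V₂) :
    pvisit G (i₂ w) = pvisit G₁ ℓ * pvisit G₂ w := by
  classical
  refine h₂.eq_mul_pvisit (f := fun w => pvisit G (i₂ w)) (fun w => ?_) w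
  by_cases hw : w = G₂.root
  · subst hw
    simp only [Pi.single_eq_same, stepMatrix_apply, h₂root, Nat.cast_zero, zero_div, mul_zero,
      Finset.sum_const_zero, add_zero]
    rw [← hg.i₁_eq_i₂_root, hg.pvisit_i₁ h₁ h₂ h₂root]
  · have hcross (u : V₁) (hu : u ∈ univ.erase ℓ) :
        pvisit G (i₁ u) * stepMatrix G (i₁ u) (i₂ w) = 0 := by
      simp [hg.adj_i₁_i₂ (Finset.ne_of_mem_erase hu) hw]
    have hroot : i₂ w ≠ G.root := fun h => hw ((hg.glue _ _).mp (hg.root ▸ h).symm).2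
    rw [(hg.isAcyclic h₁ h₂ h₂root).pvisit_eq, hg.sum_eq_sum_erase_add_sum,
      Pi.single_eq_of_ne hroot, Pi.single_eq_of_ne hw, Finset.sum_eq_zero hcross]
    simp only [hg.stepMatrix_i₂ h₂root, zero_add]

end IsGrafting

/-- **Grafting property.**  If `G` is obtained from the disjoint union of `G₁` and `G₂`
by identifying a leaf `ℓ` of `G₁` with the root of `G₂` (this identification being
described by the injections `i₁`, `i₂`), then `B₂(G) = B₂(G₁) + p_ℓ B₂(G₂)`. -/
theorem B2_grafting {V₁ V₂ V : Type*} [Fintype V₁] [Fintype V₂] [Fintype V]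
    (G₁ : Net V₁) (G₂ : Net V₂) (G : Net V)
    (h₁ : IsPhylo G₁) (h₂ : IsPhylo G₂)
    (ℓ : V₁) (hℓ : IsLeaf G₁ ℓ)
    (i₁ : V₁ → V) (i₂ : V₂ → V)
    (hi₁ : Function.Injective i₁) (hi₂ : Function.Injective i₂)
    (hcov : ∀ v : V, (∃ u, i₁ u = v) ∨ ∃ u, i₂ u = v)
    (hglue : ∀ u₁ u₂, i₁ u₁ = i₂ u₂ ↔ u₁ = ℓ ∧ u₂ = G₂.root)
    (hroot : G.root = i₁ G₁.root)
    (hadj₁ : ∀ u v, G.adj (i₁ u) (i₁ v) = G₁.adj u v)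
    (hadj₂ : ∀ u v, G.adj (i₂ u) (i₂ v) = G₂.adj u v)
    (hedges : ∀ a b, 0 < G.adj a b →
      ((∃ u, i₁ u = a) ∧ ∃ v, i₁ v = b) ∨ ((∃ u, i₂ u = a) ∧ ∃ v, i₂ v = b)) :
    B2 G = B2 G₁ + pvisit G₁ ℓ * B2 G₂ := by
  classical
  have hac₁ : IsAcyclic G₁ := h₁.1
  have hac₂ : IsAcyclic G₂ := h₂.1
  have hg : IsGrafting G₁ G₂ G ℓ i₁ i₂ := ⟨hℓ, hi₁, hi₂, hcov, hglue, hroot, hadj₁, hadj₂, hedges⟩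
  have hpart₁ : ∀ u ∈ univ.erase ℓ,
      (if IsLeaf G (i₁ u) then pvisit G (i₁ u) * Real.logb 2 (pvisit G (i₁ u)) else 0)
        = if IsLeaf G₁ u then pvisit G₁ u * Real.logb 2 (pvisit G₁ u) else 0 := fun u hu => by
    rw [hg.pvisit_i₁ hac₁ hac₂ h₂.2.1, hg.isLeaf_i₁_iff (Finset.ne_of_mem_erase hu)]
  have hpart₂ : ∑ w, (if IsLeaf G (i₂ w) then
        pvisit G (i₂ w) * Real.logb 2 (pvisit G (i₂ w)) else 0)
      = pvisit G₁ ℓ * Real.logb 2 (pvisit G₁ ℓ) - pvisit G₁ ℓ * B2 G₂ := by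
    rw [← hac₂.sum_leaves_mul_logb, Finset.sum_filter]
    simp only [hg.pvisit_i₂ hac₁ hac₂ h₂.2.1, hg.isLeaf_i₂_iff h₂.2.1]
  rw [B2, B2, Finset.sum_filter, Finset.sum_filter, hg.sum_eq_sum_erase_add_sum,
    Finset.sum_congr rfl hpart₁, hpart₂, ← Finset.add_sum_erase _ _ (mem_univ ℓ), if_pos hℓ]
  ring

end GalledB2
end

section
/- Let G be a phylogenetic network. Then for every end x of G, the set x̄ is ancestor-closed (i.e., x̄ ∈ 𝒦), and the map x ↦ x̄ from the set of ends of G into 𝒦 is injective. -/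
open Filter Topology

namespace GalledB2

/-- A (possibly infinite) rooted digraph: adjacency relation and a root. -/
structure INet (V : Type*) where
  adj : V → V → Prop
  root : V

/-- `G` is a phylogenetic network: a locally finite DAG in which the root has
in-degree 0 and every vertex is reachable from the root (the countability of the
vertex set is a typeclass assumption on `V`). -/
def IsPhyloNet {V : Type*} (G : INet V) : Prop :=
  (∀ v, {u | G.adj v u}.Finite ∧ {u | G.adj u v}.Finite) ∧
  (∀ v, ¬ Relation.TransGen G.adj v v) ∧
  (∀ u, ¬ G.adj u G.root) ∧
  (∀ v, Relation.ReflTransGen G.adj G.root v)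

/-- `anc G v = v̄` is the set of ancestors of `v` (including `v`). -/
def anc {V : Type*} (G : INet V) (v : V) : Set V :=
  {u | Relation.ReflTransGen G.adj u v}

/-- `𝒦`: the collection of ancestor-closed sets of vertices. -/
def K {V : Type*} (G : INet V) : Set (Set V) :=
  {S | ∀ u ∈ S, anc G u ⊆ S}

/-- A ray: a one-way infinite directed path. -/
def IsRay {V : Type*} (G : INet V) (r : ℕ → V) : Prop :=
  ∀ n, G.adj (r n) (r (n + 1))

/-- Two rays are co-directional if some ray shares infinitely many vertices with
each of them. -/
def CoDir {V : Type*} (G : INet V) (r r' : ℕ → V) : Prop :=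
  ∃ r'' : ℕ → V, IsRay G r'' ∧
    (Set.range r'' ∩ Set.range r).Infinite ∧
    (Set.range r'' ∩ Set.range r').Infinite

/-- An end of `G`: an equivalence class of rays for the co-directionality relation. -/
def IsEnd {V : Type*} (G : INet V) (x : Set (ℕ → V)) : Prop :=
  ∃ r, IsRay G r ∧ x = {r' | IsRay G r' ∧ CoDir G r' r}

/-- `x̄`: the set of vertices lying on some ray of the end `x`. -/
def endVerts {V : Type*} (G : INet V) (x : Set (ℕ → V)) : Set V :=
  {v | ∃ r ∈ x, ∃ n, r n = v}

/-- The height of a vertex: the minimal length of a directed path from the root. -/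
noncomputable def height {V : Type*} (G : INet V) (v : V) : ℕ :=
  sInf {n | ∃ f : ℕ → V, f 0 = G.root ∧ f n = v ∧ ∀ i < n, G.adj (f i) (f (i + 1))}

/-- `[S]_k`: the set of vertices of `S` of height at most `k`. -/
def restr {V : Type*} (G : INet V) (S : Set V) (k : ℕ) : Set V :=
  {v ∈ S | height G v ≤ k}

/-- The distance `d_𝒦(S,S') = 2^{−N(S,S')}` where
`N(S,S') = sup {n+1 : [S]_n = [S']_n}` (with `sup ∅ = 0` and `2^{−∞} = 0`):
it is the infimum of `1` (the value when no truncations agree) and of the numbers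
`2^{−(n+1)}` over the `n` with `[S]_n = [S']_n` (this set of `n` being an initial
segment of ℕ). -/
noncomputable def dK {V : Type*} (G : INet V) (S S' : Set V) : ℝ :=
  sInf ({1} ∪ {x : ℝ | ∃ n : ℕ, restr G S n = restr G S' n ∧ x = (2 : ℝ)⁻¹ ^ (n + 1)})

section Aux

variable {V : Type*} {G : INet V}

lemma ray_transGen {r : ℕ → V} (hr : IsRay G r) {i j : ℕ} (hij : i < j) :
    Relation.TransGen G.adj (r i) (r j) := by
  induction j with
  | zero => omega
  | succ j ih =>
    rcases Nat.lt_succ_iff_lt_or_eq.mp hij with h | h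
    · exact (ih h).tail (hr j)
    · subst h; exact Relation.TransGen.single (hr i)

lemma ray_reflTransGen {r : ℕ → V} (hr : IsRay G r) {i j : ℕ} (hij : i ≤ j) :
    Relation.ReflTransGen G.adj (r i) (r j) := by
  rcases Nat.lt_or_ge i j with h | h
  · exact (ray_transGen hr h).to_reflTransGen
  · have : i = j := by omega
    subst this; rfl

lemma ray_injective {r : ℕ → V} (hr : IsRay G r)
    (hac : ∀ v, ¬ Relation.TransGen G.adj v v) : Function.Injective r := by
  intro i j hij
  rcases lt_trichotomy i j with h | h | h
  · exact absurd (hij ▸ ray_transGen hr h) (hac _)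
  · exact h
  · exact absurd (hij ▸ ray_transGen hr h) (hac _)

lemma indices_infinite {w : ℕ → V} (hw : Function.Injective w) {A : Set V}
    (h : (Set.range w ∩ A).Infinite) : {c : ℕ | w c ∈ A}.Infinite := by
  by_contra hfin
  rw [Set.not_infinite] at hfin
  apply h
  have hsub : Set.range w ∩ A ⊆ w '' {c | w c ∈ A} := by
    rintro v ⟨⟨c, rfl⟩, hvA⟩
    exact ⟨c, hvA, rfl⟩
  exact (hfin.image w).subset hsub

lemma exists_index_ge {w : ℕ → V} (hw : Function.Injective w) {A : Set V}
    (h : (Set.range w ∩ A).Infinite) (c : ℕ) : ∃ d, c ≤ d ∧ w d ∈ A := by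
  have hinf := indices_infinite hw h
  by_contra hno
  push_neg at hno
  apply hinf
  refine (Set.finite_Iio c).subset ?_
  intro d hd
  by_contra h'
  exact hno d (by simpa [Set.mem_Iio] using h') hd

lemma exists_index_gt {w : ℕ → V} (hw : Function.Injective w) {A : Set V}
    (h : (Set.range w ∩ A).Infinite) (c : ℕ) : ∃ d, c < d ∧ w d ∈ A := by
  obtain ⟨d, hd, hdA⟩ := exists_index_ge hw h (c + 1)
  exact ⟨d, by omega, hdA⟩

lemma reflTransGen_path {u v : V} (h : Relation.ReflTransGen G.adj u v) :
    ∃ (m : ℕ) (f : ℕ → V), f 0 = u ∧ f m = v ∧ ∀ i < m, G.adj (f i) (f (i + 1)) := by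
  induction h with
  | refl => exact ⟨0, fun _ => u, rfl, rfl, by omega⟩
  | @tail b c hab hbc ih =>
    obtain ⟨m, f, hf0, hfm, hadj⟩ := ih
    refine ⟨m + 1, fun k => if k ≤ m then f k else c, ?_, ?_, ?_⟩
    · show (if 0 ≤ m then f 0 else c) = u
      rw [if_pos (Nat.zero_le m)]; exact hf0
    · show (if m + 1 ≤ m then f (m + 1) else c) = c
      rw [if_neg (by omega)]
    · intro i hi
      show G.adj (if i ≤ m then f i else c) (if i + 1 ≤ m then f (i + 1) else c)
      rcases Nat.lt_or_ge i m with h1 | h1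
      · rw [if_pos (le_of_lt h1), if_pos (Nat.succ_le_of_lt h1)]
        exact hadj i h1
      · have him : i = m := by omega
        subst him
        rw [if_pos le_rfl, if_neg (by omega), hfm]
        exact hbc

lemma transGen_path {u v : V} (h : Relation.TransGen G.adj u v) :
    ∃ (m : ℕ) (f : ℕ → V), 0 < m ∧ f 0 = u ∧ f m = v ∧ ∀ i < m, G.adj (f i) (f (i + 1)) := by
  obtain ⟨b, hub, hbv⟩ := Relation.TransGen.head'_iff.mp h
  obtain ⟨m, f, hf0, hfm, hadj⟩ := reflTransGen_path hbv
  refine ⟨m + 1, fun k => if k = 0 then u else f (k - 1), by omega, rfl, ?_, ?_⟩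
  · show (if m + 1 = 0 then u else f (m + 1 - 1)) = v
    rw [if_neg (by omega)]
    simpa using hfm
  · intro i hi
    show G.adj (if i = 0 then u else f (i - 1)) (if i + 1 = 0 then u else f (i + 1 - 1))
    rcases Nat.eq_zero_or_pos i with rfl | h1
    · simpa [hf0] using hub
    · rw [if_neg (by omega), if_neg (by omega)]
      have h2 : i - 1 < m := by omega
      have h3 : i + 1 - 1 = (i - 1) + 1 := by omega
      rw [h3]
      exact hadj _ h2

/-- State for the zigzag ray construction: current parity `b`, current finite
path `f` of length `m`, current position `j` on that path. -/
structure ZSt (V : Type*) where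
  b : Bool
  f : ℕ → V
  m : ℕ
  j : ℕ

/-- Invariant for zigzag states. -/
def ZInv (G : INet V) (P Q : Set V) (s : ZSt V) : Prop :=
  0 < s.m ∧ s.j ≤ s.m ∧ s.f s.m ∈ (bif s.b then P else Q) ∧
    ∀ i < s.m, G.adj (s.f i) (s.f (i + 1))

/-- One step of the zigzag construction. -/
noncomputable def zstep (G : INet V) (P Q : Set V)
    (H : ∀ (b : Bool) (v : V), v ∈ (bif b then P else Q) →
      ∃ mf : ℕ × (ℕ → V), 0 < mf.1 ∧ mf.2 0 = v ∧ mf.2 mf.1 ∈ (bif !b then P else Q) ∧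
        ∀ i < mf.1, G.adj (mf.2 i) (mf.2 (i + 1)))
    (s : {s : ZSt V // ZInv G P Q s}) : {s : ZSt V // ZInv G P Q s} :=
  if h : s.val.j < s.val.m then
    ⟨⟨s.val.b, s.val.f, s.val.m, s.val.j + 1⟩, s.prop.1, h, s.prop.2.2.1, s.prop.2.2.2⟩
  else
    ⟨⟨!s.val.b, (H s.val.b (s.val.f s.val.m) s.prop.2.2.1).choose.2,
        (H s.val.b (s.val.f s.val.m) s.prop.2.2.1).choose.1, 1⟩,
      (H s.val.b (s.val.f s.val.m) s.prop.2.2.1).choose_spec.1,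
      (H s.val.b (s.val.f s.val.m) s.prop.2.2.1).choose_spec.1,
      (H s.val.b (s.val.f s.val.m) s.prop.2.2.1).choose_spec.2.2.1,
      (H s.val.b (s.val.f s.val.m) s.prop.2.2.1).choose_spec.2.2.2⟩

lemma zstep_val_of_lt (G : INet V) (P Q : Set V) (H) (s : {s : ZSt V // ZInv G P Q s})
    (h : s.val.j < s.val.m) :
    (zstep G P Q H s).val = ⟨s.val.b, s.val.f, s.val.m, s.val.j + 1⟩ := by
  unfold zstep
  rw [dif_pos h]

lemma zstep_val_of_hit (G : INet V) (P Q : Set V) (H) (s : {s : ZSt V // ZInv G P Q s})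
    (h : ¬ s.val.j < s.val.m) :
    (zstep G P Q H s).val = ⟨!s.val.b, (H s.val.b (s.val.f s.val.m) s.prop.2.2.1).choose.2,
      (H s.val.b (s.val.f s.val.m) s.prop.2.2.1).choose.1, 1⟩ := by
  unfold zstep
  rw [dif_neg h]

/-- The zigzag lemma: if from every point of `P` there is a nontrivial directed path to a
point of `Q` and vice versa, and `P` is nonempty, then (in an acyclic digraph) there is a
ray meeting both `P` and `Q` in infinitely many vertices. -/
lemma zigzag (hac : ∀ v, ¬ Relation.TransGen G.adj v v)
    {P Q : Set V} {p₀ : V} (hp₀ : p₀ ∈ P)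
    (h1 : ∀ p ∈ P, ∃ q ∈ Q, Relation.TransGen G.adj p q)
    (h2 : ∀ q ∈ Q, ∃ p ∈ P, Relation.TransGen G.adj q p) :
    ∃ z : ℕ → V, IsRay G z ∧ (Set.range z ∩ P).Infinite ∧ (Set.range z ∩ Q).Infinite := by
  classical
  have H : ∀ (b : Bool) (v : V), v ∈ (bif b then P else Q) →
      ∃ mf : ℕ × (ℕ → V), 0 < mf.1 ∧ mf.2 0 = v ∧ mf.2 mf.1 ∈ (bif !b then P else Q) ∧
        ∀ i < mf.1, G.adj (mf.2 i) (mf.2 (i + 1)) := by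
    intro b v hv
    cases b with
    | true =>
      obtain ⟨q, hq, htg⟩ := h1 v (by simpa using hv)
      obtain ⟨m, f, hm, hf0, hfm, hadj⟩ := transGen_path htg
      exact ⟨(m, f), hm, hf0, by simpa using hfm ▸ hq, hadj⟩
    | false =>
      obtain ⟨p, hp, htg⟩ := h2 v (by simpa using hv)
      obtain ⟨m, f, hm, hf0, hfm, hadj⟩ := transGen_path htg
      exact ⟨(m, f), hm, hf0, by simpa using hfm ▸ hp, hadj⟩
  obtain ⟨⟨m0, f0⟩, hm0, hf00, hfm0, hadj0⟩ := H true p₀ (by simpa using hp₀)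
  refine ?_
  set s0 : {s : ZSt V // ZInv G P Q s} :=
    ⟨⟨false, f0, m0, 0⟩, hm0, Nat.zero_le _, by simpa using hfm0, hadj0⟩ with hs0
  set st : ℕ → {s : ZSt V // ZInv G P Q s} := fun n => (zstep G P Q H)^[n] s0 with hst
  have hsucc : ∀ n, st (n + 1) = zstep G P Q H (st n) := fun n =>
    Function.iterate_succ_apply' _ n s0
  set z : ℕ → V := fun n => (st n).val.f (st n).val.j with hz
  have hray : IsRay G z := by
    intro n
    show G.adj ((st n).val.f (st n).val.j) ((st (n + 1)).val.f (st (n + 1)).val.j)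
    by_cases h : (st n).val.j < (st n).val.m
    · rw [hsucc n, zstep_val_of_lt G P Q H (st n) h]
      exact (st n).prop.2.2.2 _ h
    · rw [hsucc n, zstep_val_of_hit G P Q H (st n) h]
      have hjm : (st n).val.j = (st n).val.m := le_antisymm (st n).prop.2.1 (not_lt.mp h)
      have hspec := (H (st n).val.b ((st n).val.f (st n).val.m) (st n).prop.2.2.1).choose_spec
      have h1 := hspec.2.2.2 0 hspec.1
      rw [hspec.2.1] at h1
      have e : (st n).val.f (st n).val.j = (st n).val.f (st n).val.m := by rw [hjm]
      rw [e]
      exact h1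
  have hprog : ∀ n k, Relation.TransGen G.adj (z n) (z (n + k + 1)) := by
    intro n k
    induction k with
    | zero => exact Relation.TransGen.single (hray n)
    | succ k ih => exact ih.tail (hray (n + k + 1))
  have hzinj : Function.Injective z := by
    intro a b hab
    rcases lt_trichotomy a b with h | h | h
    · have hpr := hprog a (b - a - 1)
      rw [show a + (b - a - 1) + 1 = b by omega, ← hab] at hpr
      exact absurd hpr (hac _)
    · exact h
    · have hpr := hprog b (a - b - 1)
      rw [show b + (a - b - 1) + 1 = a by omega, hab] at hpr
      exact absurd hpr (hac _)
  have hfirst : ∀ (d n : ℕ), (st n).val.m - (st n).val.j ≤ d →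
      ∃ n', n ≤ n' ∧ (st n').val.j = (st n').val.m ∧ (st n').val.b = (st n).val.b := by
    intro d
    induction d with
    | zero =>
      intro n h
      have hjm : (st n).val.j = (st n).val.m := by
        have := (st n).prop.2.1; omega
      exact ⟨n, le_rfl, hjm, rfl⟩
    | succ d ih =>
      intro n h
      by_cases hc : (st n).val.j < (st n).val.m
      · have h3 := zstep_val_of_lt G P Q H (st n) hc
        rw [← hsucc n] at h3
        obtain ⟨n', hn', hh, hb⟩ := ih (n + 1) (by rw [h3]; dsimp only; omega)
        refine ⟨n', by omega, hh, ?_⟩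
        rw [hb, h3]
      · have hjm : (st n).val.j = (st n).val.m := by
          have := (st n).prop.2.1; omega
        exact ⟨n, le_rfl, hjm, rfl⟩
  have hcof : ∀ (n : ℕ) (tb : Bool),
      ∃ n', n ≤ n' ∧ (st n').val.j = (st n').val.m ∧ (st n').val.b = tb := by
    intro n tb
    obtain ⟨n1, hn1, hh1, hb1⟩ := hfirst _ n le_rfl
    by_cases h : (st n1).val.b = tb
    · exact ⟨n1, hn1, hh1, h⟩
    · have hnl : ¬ (st n1).val.j < (st n1).val.m := by omega
      have h3 := zstep_val_of_hit G P Q H (st n1) hnl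
      rw [← hsucc n1] at h3
      obtain ⟨n2, hn2, hh2, hb2⟩ := hfirst _ (n1 + 1) le_rfl
      refine ⟨n2, by omega, hh2, ?_⟩
      rw [hb2, h3]
      dsimp only
      cases tb <;> cases hcb : (st n1).val.b <;> simp_all
  have hSinf : ∀ tb : Bool,
      {n | (st n).val.j = (st n).val.m ∧ (st n).val.b = tb}.Infinite := by
    intro tb
    apply Set.infinite_of_not_bddAbove
    rintro ⟨B, hB⟩
    obtain ⟨n', hn', hh, hb⟩ := hcof (B + 1) tb
    have := hB (Set.mem_setOf.mpr ⟨hh, hb⟩)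
    omega
  have hhit : ∀ (tb : Bool) (n : ℕ), (st n).val.j = (st n).val.m → (st n).val.b = tb →
      z n ∈ (bif tb then P else Q) := by
    intro tb n hj hb
    have hm := (st n).prop.2.2.1
    rw [hb] at hm
    show (st n).val.f (st n).val.j ∈ _
    rw [hj]
    exact hm
  refine ⟨z, hray, ?_, ?_⟩
  · have himg := Set.Infinite.image (hzinj.injOn) (hSinf true)
    apply himg.mono
    rintro v ⟨n, ⟨hh, hb⟩, rfl⟩
    exact ⟨⟨n, rfl⟩, by simpa using hhit true n hh hb⟩
  · have himg := Set.Infinite.image (hzinj.injOn) (hSinf false)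
    apply himg.mono
    rintro v ⟨n, ⟨hh, hb⟩, rfl⟩
    exact ⟨⟨n, rfl⟩, by simpa using hhit false n hh hb⟩


end Aux


lemma codir_self {r : ℕ → V} (hr : IsRay G r)
    (hac : ∀ v, ¬ Relation.TransGen G.adj v v) : CoDir G r r := by
  refine ⟨r, hr, ?_, ?_⟩ <;>
  · rw [Set.inter_self]
    exact Set.infinite_range_of_injective (ray_injective hr hac)

lemma to_end_reach (hac : ∀ v, ¬ Relation.TransGen G.adj v v) {s : ℕ → V} {v : V}
    (hv : v ∈ endVerts G {t | IsRay G t ∧ CoDir G t s}) :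
    ∃ q ∈ Set.range s, Relation.TransGen G.adj v q := by
  obtain ⟨t, ⟨ht, w, hw, hwt, hws⟩, n, rfl⟩ := hv
  have htinj := ray_injective ht hac
  have hwinj := ray_injective hw hac
  have htw : (Set.range t ∩ Set.range w).Infinite := by
    rw [Set.inter_comm] at hwt; exact hwt
  obtain ⟨b, hb, hbw⟩ := exists_index_gt htinj htw n
  obtain ⟨c, hc⟩ := hbw
  obtain ⟨d, hd, hds⟩ := exists_index_ge hwinj hws c
  refine ⟨w d, hds, ?_⟩
  have h1 : Relation.TransGen G.adj (t n) (t b) := ray_transGen ht hb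
  have h2 : Relation.ReflTransGen G.adj (w c) (w d) := ray_reflTransGen hw hd
  rw [hc] at h2
  exact h1.trans_left h2

lemma codir_transfer (hac : ∀ v, ¬ Relation.TransGen G.adj v v) {r s : ℕ → V}
    (hr : IsRay G r) (hs : IsRay G s)
    (hEV : endVerts G {t | IsRay G t ∧ CoDir G t r} =
      endVerts G {t | IsRay G t ∧ CoDir G t s})
    {t : ℕ → V} (ht : IsRay G t) (htr : CoDir G t r) : CoDir G t s := by
  obtain ⟨w, hw, hwt, hwr⟩ := htr
  have htinj := ray_injective ht hac
  have hwinj := ray_injective hw hac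
  have hrinj := ray_injective hr hac
  have hrY : ∀ v ∈ Set.range r, v ∈ endVerts G {t | IsRay G t ∧ CoDir G t s} := by
    rintro v ⟨n, rfl⟩
    rw [← hEV]
    exact ⟨r, ⟨hr, codir_self hr hac⟩, n, rfl⟩
  have hsX : ∀ v ∈ Set.range s, v ∈ endVerts G {t | IsRay G t ∧ CoDir G t r} := by
    rintro v ⟨n, rfl⟩
    rw [hEV]
    exact ⟨s, ⟨hs, codir_self hs hac⟩, n, rfl⟩
  have htw : (Set.range t ∩ Set.range w).Infinite := by
    rw [Set.inter_comm] at hwt; exact hwt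
  have hrw : (Set.range r ∩ Set.range w).Infinite := by
    rw [Set.inter_comm] at hwr; exact hwr
  have h1 : ∀ p ∈ Set.range t, ∃ q ∈ Set.range s, Relation.TransGen G.adj p q := by
    rintro p ⟨n, rfl⟩
    obtain ⟨b, hb, hbw⟩ := exists_index_gt htinj htw n
    obtain ⟨c, hc⟩ := hbw
    obtain ⟨d, hd, hdr⟩ := exists_index_ge hwinj hwr c
    obtain ⟨q, hq, hvq⟩ := to_end_reach hac (hrY _ hdr)
    refine ⟨q, hq, ?_⟩
    have ha : Relation.TransGen G.adj (t n) (t b) := ray_transGen ht hb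
    have hb2 : Relation.ReflTransGen G.adj (w c) (w d) := ray_reflTransGen hw hd
    rw [hc] at hb2
    exact (ha.trans_left hb2).trans hvq
  have h2 : ∀ q ∈ Set.range s, ∃ p ∈ Set.range t, Relation.TransGen G.adj q p := by
    intro q hqs
    obtain ⟨p, hpr, hqp⟩ := to_end_reach hac (hsX _ hqs)
    obtain ⟨i, hi⟩ := hpr
    obtain ⟨b, hb, hbw⟩ := exists_index_gt hrinj hrw i
    obtain ⟨c, hc⟩ := hbw
    obtain ⟨d, hd, hdt⟩ := exists_index_ge hwinj hwt c
    refine ⟨w d, hdt, ?_⟩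
    have ha : Relation.TransGen G.adj (r i) (r b) := ray_transGen hr hb
    have hb2 : Relation.ReflTransGen G.adj (w c) (w d) := ray_reflTransGen hw hd
    rw [hc] at hb2
    rw [← hi] at hqp
    exact hqp.trans (ha.trans_left hb2)
  obtain ⟨z, hz, hzt, hzs⟩ := zigzag hac (show t 0 ∈ Set.range t from ⟨0, rfl⟩) h1 h2
  exact ⟨z, hz, hzt, hzs⟩

lemma endVerts_anc_closed (hac : ∀ v, ¬ Relation.TransGen G.adj v v) (x : Set (ℕ → V))
    (hx : IsEnd G x) : endVerts G x ∈ K G := by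
  obtain ⟨r₀, hr₀, rfl⟩ := hx
  intro v hv u hu
  obtain ⟨r, ⟨hr, hrc⟩, n, rfl⟩ := hv
  obtain ⟨m, f, hf0, hfm, hadj⟩ := reflTransGen_path hu
  set r' : ℕ → V := fun k => if k < m then f k else r (n + (k - m)) with hr'def
  have hr'tail : ∀ jj, r' (m + jj) = r (n + jj) := by
    intro jj
    show (if m + jj < m then f (m + jj) else r (n + (m + jj - m))) = r (n + jj)
    rw [if_neg (by omega)]
    congr 1
    omega
  have hr'ray : IsRay G r' := by
    intro k
    show G.adj (if k < m then f k else r (n + (k - m)))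
      (if k + 1 < m then f (k + 1) else r (n + (k + 1 - m)))
    rcases lt_trichotomy (k + 1) m with h | h | h
    · rw [if_pos (by omega), if_pos h]
      exact hadj k (by omega)
    · rw [if_pos (by omega), if_neg (by omega)]
      have e : n + (k + 1 - m) = n := by omega
      rw [e, ← hfm, ← h]
      exact hadj k (by omega)
    · rw [if_neg (by omega), if_neg (by omega)]
      have e : n + (k + 1 - m) = n + (k - m) + 1 := by omega
      rw [e]
      exact hr _
  have hmem : r' ∈ {t | IsRay G t ∧ CoDir G t r₀} := by
    refine ⟨hr'ray, ?_⟩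
    obtain ⟨w, hw, hwr, hwr₀⟩ := hrc
    refine ⟨w, hw, ?_, hwr₀⟩
    have hsub : (Set.range w ∩ Set.range r) \ (r '' Set.Iio n) ⊆
        Set.range w ∩ Set.range r' := by
      rintro v ⟨⟨hvw, ⟨k, rfl⟩⟩, hnot⟩
      refine ⟨hvw, ?_⟩
      have hk : n ≤ k := by
        by_contra hcon
        exact hnot ⟨k, Set.mem_Iio.mpr (by omega), rfl⟩
      refine ⟨m + (k - n), ?_⟩
      rw [hr'tail]
      congr 1
      omega
    exact ((hwr.diff ((Set.finite_Iio n).image r)).mono hsub)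
  refine ⟨r', hmem, 0, ?_⟩
  show (if 0 < m then f 0 else r (n + (0 - m))) = u
  by_cases h0 : 0 < m
  · rw [if_pos h0]
    exact hf0
  · rw [if_neg h0]
    have hm0 : m = 0 := by omega
    have : r (n + (0 - m)) = r n := by congr 1; omega
    rw [this, ← hfm, hm0]
    exact hf0

/-- **Theorem.** For every end `x` of a phylogenetic network, `x̄` is ancestor-closed
(i.e. `x̄ ∈ 𝒦`), and the map `x ↦ x̄` is injective on ends. -/
theorem endVerts_mem_K_and_injective {V : Type*} [Countable V]
    (G : INet V) (hG : IsPhyloNet G) :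
    (∀ x, IsEnd G x → endVerts G x ∈ K G) ∧
    (∀ x y, IsEnd G x → IsEnd G y → endVerts G x = endVerts G y → x = y) := by
  have hac := hG.2.1
  constructor
  · exact fun x hx => endVerts_anc_closed hac x hx
  · intro x y hx hy hxy
    obtain ⟨r, hr, rfl⟩ := hx
    obtain ⟨s, hs, rfl⟩ := hy
    ext t
    constructor
    · rintro ⟨ht, htr⟩
      exact ⟨ht, codir_transfer hac hr hs hxy ht htr⟩
    · rintro ⟨ht, hts⟩
      exact ⟨ht, codir_transfer hac hs hr hxy.symm ht hts⟩

end GalledB2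
end

section
/- Let t be a finite phylogenetic network in which every vertex other than the root has in-degree 1 (i.e., a finite rooted tree). Then B₂(t) = Σ_v p_v · log₂ d⁺(v), where the sum runs over the internal vertices v of t (those with d⁺(v) ≥ 1), and p_v = ∏_u 1/d⁺(u), the product running over the vertices u on the unique directed path from the root of t to v, excluding v itself. -/
/-!
A closed formula for the B₂ index of a finite rooted tree
(Corollary "corAlternativeFormulaB2Tree" of the paper):
`B₂(t) = Σ_v p_v log₂ d⁺(v)`, the sum running over the internal vertices of `t`.
-/

open Finset

namespace GalledB2

variable {V : Type*} [Fintype V]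

open Classical in
noncomputable def term (G : Net V) (j : ℕ) (v : V) : ℝ :=
  ∑ f : Fin (j + 1) → V,
    if f 0 = G.root ∧ f (Fin.last j) = v then
      ∏ i : Fin j, (G.adj (f i.castSucc) (f i.succ) : ℝ) / (outDeg G (f i.castSucc) : ℝ)
    else 0

lemma pvisit_eq (G : Net V) (v : V) :
    pvisit G v = ∑ j ∈ Finset.range (Fintype.card V), term G j v := rfl

open Classical in
lemma term_zero (G : Net V) (v : V) :
    term G 0 v = if v = G.root then 1 else 0 := by
  classical
  rw [term, ← Equiv.sum_comp ((Equiv.funUnique (Fin 1) V).symm)]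
  simp only [Equiv.funUnique_symm_apply, Finset.univ_unique]
  by_cases h : v = G.root
  · subst h
    simp
  · simp only [Fin.last]
    rw [Finset.sum_eq_zero, if_neg h]
    intro x _
    rw [if_neg]
    rintro ⟨h1, h2⟩
    simp at h1 h2
    exact h (h2.symm.trans h1)

lemma term_succ_root (G : Net V) (hroot : ∀ u, G.adj u G.root = 0) (j : ℕ) :
    term G (j + 1) G.root = 0 := by
  classical
  rw [term]
  refine Finset.sum_eq_zero fun f _ => ?_
  split_ifs with h
  · refine Finset.prod_eq_zero (Finset.mem_univ (Fin.last j)) ?_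
    have h2 : f (Fin.last j).succ = G.root := by rw [Fin.succ_last]; exact h.2
    rw [h2, hroot, Nat.cast_zero, zero_div]
  · rfl

lemma pvisit_root (G : Net V) (hroot : ∀ u, G.adj u G.root = 0) :
    pvisit G G.root = 1 := by
  have hpos : 0 < Fintype.card V := Fintype.card_pos_iff.mpr ⟨G.root⟩
  rw [pvisit_eq]
  rw [Finset.sum_eq_single_of_mem 0 (Finset.mem_range.mpr hpos)]
  · rw [term_zero, if_pos rfl]
  · intro b _ hb
    obtain ⟨k, rfl⟩ := Nat.exists_eq_succ_of_ne_zero hb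
    exact term_succ_root G hroot k


lemma chain_transGen (G : Net V) {j : ℕ} (f : Fin (j + 1) → V)
    (hf : ∀ i : Fin j, 0 < G.adj (f i.castSucc) (f i.succ)) :
    ∀ b a : Fin (j + 1), a < b →
      Relation.TransGen (fun a b => 0 < G.adj a b) (f a) (f b) := by
  intro b
  induction b using Fin.induction with
  | zero => exact fun a ha => absurd ha (by simp)
  | succ i ih =>
    intro a ha
    have ha' : a ≤ i.castSucc := by
      rw [Fin.le_def]
      rw [Fin.lt_def] at ha
      simp only [Fin.val_succ] at ha
      simpa using Nat.lt_succ_iff.mp ha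
    rcases lt_or_eq_of_le ha' with h | h
    · exact (ih a h).tail (hf i)
    · rw [h]; exact Relation.TransGen.single (hf i)

lemma path_injective (G : Net V)
    (hacyc : ∀ v, ¬ Relation.TransGen (fun a b => 0 < G.adj a b) v v)
    {j : ℕ} (f : Fin (j + 1) → V)
    (hf : ∀ i : Fin j, 0 < G.adj (f i.castSucc) (f i.succ)) : Function.Injective f := by
  intro a b hab
  by_contra hne
  rcases Ne.lt_or_gt hne with h | h
  · exact hacyc (f a) (hab ▸ chain_transGen G f hf b a h)
  · exact hacyc (f b) (hab ▸ chain_transGen G f hf a b h)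

lemma term_top (G : Net V)
    (hacyc : ∀ v, ¬ Relation.TransGen (fun a b => 0 < G.adj a b) v v)
    {u v : V} (huv : 0 < G.adj u v)
    (m : ℕ) (hm : m + 1 = Fintype.card V) : term G m u = 0 := by
  classical
  rw [term]
  refine Finset.sum_eq_zero fun f _ => ?_
  split_ifs with h
  · by_contra hp
    have hpos : ∀ i : Fin m, 0 < G.adj (f i.castSucc) (f i.succ) := by
      intro i
      have hi := Finset.prod_ne_zero_iff.mp hp i (Finset.mem_univ i)
      rcases Nat.eq_zero_or_pos (G.adj (f i.castSucc) (f i.succ)) with h0 | h0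
      · rw [h0] at hi; simp at hi
      · exact h0
    have hinj := path_injective G hacyc f hpos
    have hbij : Function.Bijective f := by
      rw [Fintype.bijective_iff_injective_and_card]
      exact ⟨hinj, by simp [hm]⟩
    obtain ⟨k, hk⟩ := hbij.2 v
    rcases lt_or_eq_of_le (Fin.le_last k) with hlt | heq
    · refine hacyc v ?_
      have h1 := chain_transGen G f hpos (Fin.last m) k hlt
      rw [hk, h.2] at h1
      exact h1.tail huv
    · refine hacyc v (Relation.TransGen.single ?_)
      rw [← hk, heq, h.2] at huv ⊢
      rw [heq, h.2] at hk
      exact huv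
  · rfl


lemma term_succ (G : Net V) {u v : V}
    (huv : G.adj u v = 1) (huniq : ∀ w, 0 < G.adj w v → w = u) (j : ℕ) :
    term G (j + 1) v = term G j u * (outDeg G u : ℝ)⁻¹ := by
  classical
  rw [term]
  rw [← Equiv.sum_comp (Fin.snocEquiv (fun _ : Fin (j + 2) => V))]
  rw [Fintype.sum_prod_type]
  rw [Finset.sum_comm]
  have step1 : ∀ g : Fin (j + 1) → V,
      (∑ x : V, if (Fin.snocEquiv (fun _ : Fin (j + 2) => V)) (x, g) 0 = G.root ∧
          (Fin.snocEquiv (fun _ : Fin (j + 2) => V)) (x, g) (Fin.last (j + 1)) = v then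
        ∏ i : Fin (j + 1),
          (G.adj ((Fin.snocEquiv (fun _ : Fin (j + 2) => V)) (x, g) i.castSucc)
              ((Fin.snocEquiv (fun _ : Fin (j + 2) => V)) (x, g) i.succ) : ℝ) /
            (outDeg G ((Fin.snocEquiv (fun _ : Fin (j + 2) => V)) (x, g) i.castSucc) : ℝ)
      else 0)
      = (if g 0 = G.root ∧ g (Fin.last j) = u then
          (∏ i : Fin j, (G.adj (g i.castSucc) (g i.succ) : ℝ) / (outDeg G (g i.castSucc) : ℝ))
            * (outDeg G u : ℝ)⁻¹
        else 0) := by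
    intro g
    have hsnoc : ∀ x : V, ∀ i : Fin (j + 2),
        (Fin.snocEquiv (fun _ : Fin (j + 2) => V)) (x, g) i
          = @Fin.snoc (j + 1) (fun _ => V) g x i := by
      intro x i; rfl
    simp only [hsnoc]
    have e0 : (0 : Fin (j + 2)) = Fin.castSucc 0 := rfl
    have key : ∀ x : V,
        (if @Fin.snoc (j + 1) (fun _ => V) g x (0 : Fin (j + 2)) = G.root ∧
            @Fin.snoc (j + 1) (fun _ => V) g x (Fin.last (j + 1)) = v then
            ∏ i : Fin (j + 1),
              (G.adj (@Fin.snoc (j + 1) (fun _ => V) g x i.castSucc)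
                  (@Fin.snoc (j + 1) (fun _ => V) g x i.succ) : ℝ) /
                (outDeg G (@Fin.snoc (j + 1) (fun _ => V) g x i.castSucc) : ℝ)
          else 0)
        = if g 0 = G.root ∧ x = v then
            (∏ i : Fin j, (G.adj (g i.castSucc) (g i.succ) : ℝ) / (outDeg G (g i.castSucc) : ℝ))
              * ((G.adj (g (Fin.last j)) x : ℝ) / (outDeg G (g (Fin.last j)) : ℝ))
          else 0 := by
      intro x
      rw [e0, Fin.snoc_castSucc, Fin.snoc_last, Fin.prod_univ_castSucc]
      simp only [Fin.succ_castSucc, Fin.snoc_castSucc, Fin.succ_last, Fin.snoc_last]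
    rw [Finset.sum_congr rfl fun x _ => key x]
    by_cases hg : g 0 = G.root
    · simp only [hg, true_and]
      rw [Finset.sum_ite_eq' Finset.univ v]
      simp only [Finset.mem_univ, if_true]
      by_cases hu : g (Fin.last j) = u
      · rw [if_pos hu, hu, huv]
        norm_num
      · have hz : G.adj (g (Fin.last j)) v = 0 := by
          by_contra hno
          exact hu (huniq _ (Nat.pos_of_ne_zero hno))
        rw [if_neg hu, hz]
        norm_num
    · simp [hg]
  rw [Finset.sum_congr rfl fun g _ => step1 g]
  rw [term, Finset.sum_mul]
  exact Finset.sum_congr rfl fun g _ => by rw [ite_mul, zero_mul]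


lemma exists_parent (t : Net V) (ht : IsPhylo t)
    (htree : ∀ v, v ≠ t.root → inDeg t v = 1) {v : V} (hv : v ≠ t.root) :
    ∃ u, t.adj u v = 1 ∧ ∀ w, 0 < t.adj w v → w = u := by
  classical
  have hdeg : inDeg t v = 1 := htree v hv
  rw [inDeg] at hdeg
  have hex : ∃ u, t.adj u v ≠ 0 := by
    by_contra hall
    push_neg at hall
    simp [hall] at hdeg
  obtain ⟨u, hu⟩ := hex
  have hle : ∀ w, t.adj w v ≤ 1 := by
    intro w
    calc t.adj w v ≤ ∑ u, t.adj u v :=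
          Finset.single_le_sum (f := fun x => t.adj x v) (fun i _ => Nat.zero_le _)
            (Finset.mem_univ w)
      _ = 1 := hdeg
  have hu1 : t.adj u v = 1 := le_antisymm (hle u) (Nat.one_le_iff_ne_zero.mpr hu)
  refine ⟨u, hu1, fun w hw => ?_⟩
  by_contra hne
  have hlew := hle w
  have h2 : 2 ≤ ∑ x, t.adj x v := by
    calc 2 ≤ t.adj w v + t.adj u v := by omega
      _ = ∑ x ∈ ({w, u} : Finset V), t.adj x v :=
          (Finset.sum_pair (f := fun x => t.adj x v) hne).symm
      _ ≤ ∑ x, t.adj x v :=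
          Finset.sum_le_sum_of_subset (Finset.subset_univ _)
  omega

lemma outDeg_pos_of_adj (t : Net V) {u v : V} (huv : 0 < t.adj u v) : 0 < outDeg t u :=
  lt_of_lt_of_le huv (Finset.single_le_sum (fun i _ => Nat.zero_le _) (Finset.mem_univ v))

lemma pvisit_rec (t : Net V) (ht : IsPhylo t)
    (htree : ∀ v, v ≠ t.root → inDeg t v = 1) {v u : V} (hv : v ≠ t.root)
    (huv1 : t.adj u v = 1) (huniq : ∀ w, 0 < t.adj w v → w = u) :
    pvisit t v = pvisit t u * (outDeg t u : ℝ)⁻¹ := by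
  obtain ⟨m, hm⟩ : ∃ m, Fintype.card V = m + 1 :=
    Nat.exists_eq_succ_of_ne_zero (Nat.pos_iff_ne_zero.mp (Fintype.card_pos_iff.mpr ⟨t.root⟩))
  rw [pvisit_eq, pvisit_eq, hm, Finset.sum_range_succ' (fun j => term t j v) m,
    Finset.sum_range_succ (fun j => term t j u) m]
  rw [term_zero, if_neg hv, add_zero]
  rw [term_top t ht.1 (show 0 < t.adj u v by omega) m hm.symm, add_zero]
  rw [Finset.sum_congr rfl fun j _ => term_succ t huv1 huniq j, ← Finset.sum_mul]


open Classical in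
lemma children_card (t : Net V) (ht : IsPhylo t)
    (htree : ∀ v, v ≠ t.root → inDeg t v = 1) (v : V) :
    (Finset.univ.filter (fun c => 0 < t.adj v c)).card = outDeg t v := by
  classical
  have hle : ∀ c : V, t.adj v c ≤ 1 := by
    intro c
    by_cases hc : c = t.root
    · rw [hc, ht.2.1]; omega
    · obtain ⟨u, hu1, huniq⟩ := exists_parent t ht htree hc
      by_cases hv : v = u
      · rw [hv, hu1]
      · have : ¬ 0 < t.adj v c := fun h => hv (huniq v h)
        omega
  rw [Finset.card_filter, outDeg]
  refine (Finset.sum_congr rfl fun c _ => ?_).symm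
  have := hle c
  split_ifs with h <;> omega

open Classical in
lemma local_id (t : Net V) (ht : IsPhylo t)
    (htree : ∀ v, v ≠ t.root → inDeg t v = 1) {v : V} (hv : 0 < outDeg t v) :
    pvisit t v * Real.logb 2 (outDeg t v)
      = pvisit t v * Real.logb 2 (pvisit t v)
        - ∑ c ∈ Finset.univ.filter (fun c => 0 < t.adj v c),
            pvisit t c * Real.logb 2 (pvisit t c) := by
  classical
  have hchild : ∀ c ∈ Finset.univ.filter (fun c => 0 < t.adj v c),
      pvisit t c = pvisit t v * (outDeg t v : ℝ)⁻¹ := by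
    intro c hc
    rw [Finset.mem_filter] at hc
    have hcr : c ≠ t.root := by
      intro h
      rw [h, ht.2.1] at hc
      omega
    obtain ⟨u, hu1, huniq⟩ := exists_parent t ht htree hcr
    have hvu : v = u := huniq v hc.2
    rw [pvisit_rec t ht htree hcr hu1 huniq, hvu]
  have hsum : ∑ c ∈ Finset.univ.filter (fun c => 0 < t.adj v c),
      pvisit t c * Real.logb 2 (pvisit t c)
      = (outDeg t v : ℝ) * ((pvisit t v * (outDeg t v : ℝ)⁻¹)
          * Real.logb 2 (pvisit t v * (outDeg t v : ℝ)⁻¹)) := by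
    rw [Finset.sum_congr rfl fun c hc => by rw [hchild c hc]]
    rw [Finset.sum_const, children_card t ht htree, nsmul_eq_mul]
  rw [hsum]
  have hD : (outDeg t v : ℝ) ≠ 0 := Nat.cast_ne_zero.mpr (Nat.pos_iff_ne_zero.mp hv)
  by_cases hp : pvisit t v = 0
  · simp [hp]
  · rw [Real.logb_mul hp (inv_ne_zero hD), Real.logb_inv]
    field_simp
    ring

open Classical in
lemma sum_children (t : Net V) (ht : IsPhylo t)
    (htree : ∀ v, v ≠ t.root → inDeg t v = 1) (F : V → ℝ) :
    ∑ v ∈ Finset.univ.filter (fun v => 0 < outDeg t v),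
        ∑ c ∈ Finset.univ.filter (fun c => 0 < t.adj v c), F c
      = ∑ c ∈ Finset.univ.filter (fun c => c ≠ t.root), F c := by
  classical
  have h1 : ∑ v ∈ Finset.univ.filter (fun v => 0 < outDeg t v),
        ∑ c ∈ Finset.univ.filter (fun c => 0 < t.adj v c), F c
      = ∑ v : V, ∑ c ∈ Finset.univ.filter (fun c => 0 < t.adj v c), F c := by
    rw [Finset.sum_filter]
    refine Finset.sum_congr rfl fun v _ => ?_
    split_ifs with h
    · rfl
    · have hz : ∀ c, t.adj v c = 0 := by
        have h0 : outDeg t v = 0 := by omega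
        rw [outDeg] at h0
        intro c
        exact (Finset.sum_eq_zero_iff.mp h0) c (Finset.mem_univ c)
      rw [Finset.filter_false_of_mem (fun c _ => by rw [hz c]; omega), Finset.sum_empty]
  rw [h1]
  have h2 : ∀ v : V, ∑ c ∈ Finset.univ.filter (fun c => 0 < t.adj v c), F c
      = ∑ c : V, if 0 < t.adj v c then F c else 0 := fun v => Finset.sum_filter _ _
  rw [Finset.sum_congr rfl fun v _ => h2 v, Finset.sum_comm]
  rw [Finset.sum_filter]
  refine Finset.sum_congr rfl fun c _ => ?_
  by_cases hc : c = t.root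
  · rw [if_neg (by simp [hc])]
    refine Finset.sum_eq_zero fun v _ => ?_
    rw [if_neg]
    rw [hc, ht.2.1]
    omega
  · rw [if_pos hc]
    obtain ⟨u, hu1, huniq⟩ := exists_parent t ht htree hc
    have : ∀ v : V, (if 0 < t.adj v c then F c else 0) = if v = u then F c else 0 := by
      intro v
      by_cases hvu : v = u
      · rw [if_pos hvu, if_pos (by rw [hvu, hu1]; omega)]
      · rw [if_neg hvu, if_neg (fun h => hvu (huniq v h))]
    rw [Finset.sum_congr rfl fun v _ => this v, Finset.sum_ite_eq' Finset.univ u]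
    simp


/-- **Theorem.** For a finite rooted tree `t` (a finite phylogenetic network in which
every non-root vertex has in-degree 1), `B₂(t) = Σ_v p_v log₂ d⁺(v)`, the sum
running over the internal vertices of `t`. -/
theorem B2_tree_formula (t : Net V) (ht : IsPhylo t)
    (htree : ∀ v, v ≠ t.root → inDeg t v = 1) :
    B2 t = ∑ v ∈ Finset.univ.filter (fun v => 0 < outDeg t v),
      pvisit t v * Real.logb 2 (outDeg t v) := by
  classical
  have h1 : ∑ v ∈ Finset.univ.filter (fun v => 0 < outDeg t v),
      pvisit t v * Real.logb 2 (outDeg t v)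
      = (∑ v ∈ Finset.univ.filter (fun v => 0 < outDeg t v),
          pvisit t v * Real.logb 2 (pvisit t v))
        - ∑ c ∈ Finset.univ.filter (fun c => c ≠ t.root),
            pvisit t c * Real.logb 2 (pvisit t c) := by
    rw [← sum_children t ht htree (fun c => pvisit t c * Real.logb 2 (pvisit t c)),
      ← Finset.sum_sub_distrib]
    exact Finset.sum_congr rfl fun v hv =>
      local_id t ht htree (Finset.mem_filter.mp hv).2
  have h2 : ∑ c ∈ Finset.univ.filter (fun c => c ≠ t.root),
      pvisit t c * Real.logb 2 (pvisit t c)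
      = ∑ c : V, pvisit t c * Real.logb 2 (pvisit t c) := by
    rw [Finset.filter_ne']
    exact Finset.sum_erase _ (by simp [pvisit_root t ht.2.1])
  have h3 : (∑ v ∈ Finset.univ.filter (fun v => 0 < outDeg t v),
        pvisit t v * Real.logb 2 (pvisit t v))
      + ∑ v ∈ Finset.univ.filter (fun v => IsLeaf t v),
          pvisit t v * Real.logb 2 (pvisit t v)
      = ∑ v : V, pvisit t v * Real.logb 2 (pvisit t v) := by
    rw [← Finset.sum_filter_add_sum_filter_not Finset.univ (fun v => 0 < outDeg t v)
      (fun v => pvisit t v * Real.logb 2 (pvisit t v))]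
    congr 1
    refine Finset.sum_congr (Finset.filter_congr fun v _ => ?_) fun _ _ => rfl
    simp [IsLeaf]
  rw [h1, h2, B2]
  linarith [h3]

end GalledB2
end

section
/- For every real ω with |ω| < 1, the double series identity Σ_{k≥0} Σ_{m≥0} (3 − (k+3)/2^{k+1} − (m+3)/2^{m+1}) ω^{k+m+1} = −ω²(ω − 4)/((ω−1)²(ω−2)²) holds (the double series being absolutely convergent). -/
/-!
Closed form of the generating function of the non-logarithmic part of the toll terms
`μ_{k,m}` used in the analytic-combinatorics derivation.
-/

namespace GalledB2

/-- **Theorem.** For `|ω| < 1`,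
`Σ_{k,m≥0} (3 − (k+3)/2^{k+1} − (m+3)/2^{m+1}) ω^{k+m+1}
  = −ω²(ω−4)/((ω−1)²(ω−2)²)`, the double series being absolutely convergent. -/
theorem toll_generating_function (ω : ℝ) (hω : |ω| < 1) :
    Summable (fun km : ℕ × ℕ =>
      (3 - ((km.1 : ℝ) + 3) / 2 ^ (km.1 + 1) - ((km.2 : ℝ) + 3) / 2 ^ (km.2 + 1)) *
        ω ^ (km.1 + km.2 + 1)) ∧
    ∑' km : ℕ × ℕ,
        (3 - ((km.1 : ℝ) + 3) / 2 ^ (km.1 + 1) - ((km.2 : ℝ) + 3) / 2 ^ (km.2 + 1)) *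
          ω ^ (km.1 + km.2 + 1) =
      -(ω ^ 2 * (ω - 4)) / ((ω - 1) ^ 2 * (ω - 2) ^ 2) := by
  have hω' : ‖ω‖ < 1 := by rwa [Real.norm_eq_abs]
  have hω2 : ‖ω / 2‖ < 1 := by
    rw [norm_div, Real.norm_ofNat]
    nlinarith [norm_nonneg ω]
  set f : ℕ → ℝ := fun n => 3 / 2 * ω ^ n - 1 / 2 * ((n : ℝ) * (ω / 2) ^ n) -
      3 / 2 * (ω / 2) ^ n with hfdef
  set g : ℕ → ℝ := fun n => ω ^ n with hgdef
  have hf : Summable f := by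
    apply Summable.sub
    apply Summable.sub
    · exact (summable_geometric_of_norm_lt_one hω').mul_left _
    · have := summable_pow_mul_geometric_of_norm_lt_one 1 hω2
      simpa [pow_one] using this.mul_left (1 / 2 : ℝ)
    · exact (summable_geometric_of_norm_lt_one hω2).mul_left _
  have hg : Summable g := summable_geometric_of_norm_lt_one hω'
  have hfn : Summable fun n => ‖f n‖ := summable_norm_iff.mpr hf
  have hgn : Summable fun n => ‖g n‖ := summable_norm_iff.mpr hg
  -- pointwise identity
  have hpt : ∀ km : ℕ × ℕ,
      (3 - ((km.1 : ℝ) + 3) / 2 ^ (km.1 + 1) - ((km.2 : ℝ) + 3) / 2 ^ (km.2 + 1)) *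
        ω ^ (km.1 + km.2 + 1) = ω * (f km.1 * g km.2 + g km.1 * f km.2) := by
    rintro ⟨k, m⟩
    have h2k : (2 : ℝ) ^ (k + 1) ≠ 0 := by positivity
    have h2m : (2 : ℝ) ^ (m + 1) ≠ 0 := by positivity
    simp only [hfdef, hgdef, div_pow]
    field_simp
    ring
  have hsum : Summable (fun km : ℕ × ℕ => ω * (f km.1 * g km.2 + g km.1 * f km.2)) := by
    exact (((summable_mul_of_summable_norm hfn hgn).add
      (summable_mul_of_summable_norm hgn hfn)).mul_left ω)
  have hS : Summable (fun km : ℕ × ℕ =>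
      (3 - ((km.1 : ℝ) + 3) / 2 ^ (km.1 + 1) - ((km.2 : ℝ) + 3) / 2 ^ (km.2 + 1)) *
        ω ^ (km.1 + km.2 + 1)) := by
    refine hsum.congr fun km => (hpt km).symm
  refine ⟨hS, ?_⟩
  have h1 : ω ≠ 1 := by
    intro h; rw [h] at hω; simp at hω
  have hne1 : (1 : ℝ) - ω ≠ 0 := by
    intro h; apply h1; linarith
  have hne2 : (1 : ℝ) - ω / 2 ≠ 0 := by
    have := abs_lt.mp hω
    intro h; nlinarith [this.1, this.2]
  have hF : ∑' n, f n = 3 / 2 * (1 - ω)⁻¹ - 1 / 2 * (ω / 2 / (1 - ω / 2) ^ 2) -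
      3 / 2 * (1 - ω / 2)⁻¹ := by
    rw [hfdef]
    rw [Summable.tsum_sub (by
        apply Summable.sub
        · exact (summable_geometric_of_norm_lt_one hω').mul_left _
        · have := summable_pow_mul_geometric_of_norm_lt_one 1 hω2
          simpa [pow_one] using this.mul_left (1 / 2 : ℝ))
      ((summable_geometric_of_norm_lt_one hω2).mul_left _)]
    rw [Summable.tsum_sub ((summable_geometric_of_norm_lt_one hω').mul_left _) (by
        have := summable_pow_mul_geometric_of_norm_lt_one 1 hω2
        simpa [pow_one] using this.mul_left (1 / 2 : ℝ))]
    rw [tsum_mul_left, tsum_mul_left, tsum_mul_left,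
      tsum_geometric_of_norm_lt_one hω', tsum_geometric_of_norm_lt_one hω2,
      tsum_coe_mul_geometric_of_norm_lt_one hω2]
  have hG : ∑' n, g n = (1 - ω)⁻¹ := tsum_geometric_of_norm_lt_one hω'
  calc ∑' km : ℕ × ℕ,
        (3 - ((km.1 : ℝ) + 3) / 2 ^ (km.1 + 1) - ((km.2 : ℝ) + 3) / 2 ^ (km.2 + 1)) *
          ω ^ (km.1 + km.2 + 1)
      = ∑' km : ℕ × ℕ, ω * (f km.1 * g km.2 + g km.1 * f km.2) := tsum_congr hpt
    _ = ω * ((∑' n, f n) * (∑' n, g n) + (∑' n, g n) * (∑' n, f n)) := by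
        rw [tsum_mul_left, Summable.tsum_add (summable_mul_of_summable_norm hfn hgn)
          (summable_mul_of_summable_norm hgn hfn),
          tsum_mul_tsum_of_summable_norm hfn hgn, tsum_mul_tsum_of_summable_norm hgn hfn]
    _ = -(ω ^ 2 * (ω - 4)) / ((ω - 1) ^ 2 * (ω - 2) ^ 2) := by
        rw [hF, hG]
        have hne1' : ω - 1 ≠ 0 := fun h => hne1 (by linarith)
        have hne2' : ω - 2 ≠ 0 := fun h => hne2 (by linarith)
        have hne2'' : (2 : ℝ) - ω ≠ 0 := fun h => hne2 (by linarith)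
        field_simp
        ring

end GalledB2
end
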